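/- arXiv:2009.04151 — 2 statements merged into one kernel-verified Lean document; each statement's English description precedes it below -/
import Mathlib

section
/- The family {u_π : π ∈ K_M⁺ \ {0}}, with u_π(x) = -inf{π(m) : m ∈ M, x + m ∈ A}, is a multi-utility representation of ⪰_R: for all x, y ∈ L, R(x) ⊇ R(y) if and only if u_π(x) ≥ u_π(y) for every nonzero π ∈ K_M⁺. -/
/-!
If `m ∈ R(y) \ R(x)` and `R(x) ≠ ∅`, Hahn–Banach separates `x + m` from the closed convex set
`A` by a functional `f`. Since `A + K ⊆ A` and `f` is bounded below on `A`, `f` is nonnegative on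
`K`, so its restriction `π` to `M` lies in `K_M⁺`, and `rhoPi π y ≤ π m < rhoPi π x`.
If `R(x) = ∅` then `rhoPi π x = ⊤` for every `π`, and any nonzero `π ∈ K_M⁺` (obtained in the
same way from `x₀`) works.
-/

noncomputable def rhoPi {L : Type*} [AddCommGroup L] [Module ℝ L] [TopologicalSpace L]
    (A : Set L) (M : Submodule ℝ L) (π : M →L[ℝ] ℝ) (x : L) : EReal :=
  sInf ((fun n : M => ((π n : ℝ) : EReal)) '' {n : M | x + (n : L) ∈ A})

open Set

lemma nonneg_of_forall_pos_lt_add_mul {u b c : ℝ} (h : ∀ t > 0, u < b + t * c) : 0 ≤ c := by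
  by_contra! hc
  have ht : 0 < (|b - u| + 1) / -c := div_pos (by positivity) (neg_pos.mpr hc)
  have hmul : (|b - u| + 1) / -c * c = -(|b - u| + 1) := by
    field_simp [hc.ne]
  have := h _ ht
  rw [hmul] at this
  linarith [le_abs_self (b - u)]

section RhoPi

variable {L : Type*} [AddCommGroup L] [Module ℝ L] [TopologicalSpace L] {A : Set L}
  (M : Submodule ℝ L) (π : M →L[ℝ] ℝ)

lemma rhoPi_le_of_add_mem {x : L} {n : M}
    (hn : x + (n : L) ∈ A) : rhoPi A M π x ≤ (π n : EReal) :=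
  sInf_le ⟨n, hn, rfl⟩

lemma rhoPi_le_rhoPi {x y : L}
    (h : ∀ n : M, y + (n : L) ∈ A → x + (n : L) ∈ A) : rhoPi A M π x ≤ rhoPi A M π y :=
  sInf_le_sInf (image_mono h)

lemma rhoPi_eq_top {x : L}
    (h : ∀ n : M, x + (n : L) ∉ A) : rhoPi A M π x = ⊤ := by
  rw [rhoPi, show {n : M | x + (n : L) ∈ A} = ∅ from eq_empty_of_forall_notMem h, image_empty,
    sInf_empty]

end RhoPi

section Separation

variable {L : Type*} [AddCommGroup L] [Module ℝ L] [TopologicalSpace L]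
  [IsTopologicalAddGroup L] [ContinuousSMul ℝ L] [LocallyConvexSpace ℝ L]
  {K : ConvexCone ℝ L} {A : Set L}

lemma ConvexCone.exists_nonneg_separating_of_add_mem (hAcl : IsClosed A) (hAconv : Convex ℝ A)
    (hAK : ∀ a ∈ A, ∀ k ∈ K, a + k ∈ A) (hA : A.Nonempty) {z : L} (hz : z ∉ A) :
    ∃ (f : L →L[ℝ] ℝ) (u : ℝ), f z < u ∧ (∀ a ∈ A, u < f a) ∧ ∀ k ∈ K, 0 ≤ f k := by
  obtain ⟨f, u, hfz, hfA⟩ := geometric_hahn_banach_point_closed hAconv hAcl hz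
  obtain ⟨a, ha⟩ := hA
  refine ⟨f, u, hfz, hfA, fun k hk =>
    nonneg_of_forall_pos_lt_add_mul (u := u) (b := f a) fun t ht => ?_⟩
  simpa using hfA _ (hAK a ha _ (K.smul_mem ht hk))

lemma exists_nonneg_ne_zero_lt_rhoPi (hAcl : IsClosed A) (hAconv : Convex ℝ A)
    (hAK : ∀ a ∈ A, ∀ k ∈ K, a + k ∈ A) (M : Submodule ℝ L) {x : L} {m n : M}
    (hn : x + (n : L) ∈ A) (hm : x + (m : L) ∉ A) :
    ∃ π : M →L[ℝ] ℝ, π ≠ 0 ∧ (∀ k : M, (k : L) ∈ K → 0 ≤ π k) ∧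
      (π m : EReal) < rhoPi A M π x := by
  obtain ⟨f, u, hfm, hfA, hfK⟩ :=
    K.exists_nonneg_separating_of_add_mem hAcl hAconv hAK ⟨_, hn⟩ hm
  set π := f.comp M.subtypeL
  have hπm : (π m : EReal) < (u - f x : ℝ) := by
    rw [map_add] at hfm
    exact EReal.coe_lt_coe_iff.mpr (show f m < u - f x by linarith)
  have hρ : ((u - f x : ℝ) : EReal) ≤ rhoPi A M π x := by
    refine le_sInf ?_
    rintro _ ⟨k, hk, rfl⟩
    have := hfA _ hk
    rw [map_add] at this
    exact EReal.coe_le_coe_iff.mpr (show u - f x ≤ f k by linarith)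
  have hlt := hπm.trans_le hρ
  refine ⟨π, ?_, fun k hk => hfK _ hk, hlt⟩
  intro hπ0
  have := hlt.trans_le (rhoPi_le_of_add_mem M π hn)
  simp [hπ0] at this

end Separation

theorem stmt_14_general {L : Type*} [AddCommGroup L] [Module ℝ L] [TopologicalSpace L]
    [IsTopologicalAddGroup L] [ContinuousSMul ℝ L] [LocallyConvexSpace ℝ L]
    (K : ConvexCone ℝ L)
    (A : Set L) (hAcl : IsClosed A) (hAconv : Convex ℝ A)
    (hAK : ∀ a ∈ A, ∀ k ∈ K, a + k ∈ A)
    (M : Submodule ℝ L)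
    (R : L → Set L) (hR : ∀ x, R x = {m : L | m ∈ M ∧ x + m ∈ A})
    (hx₀ : ∃ x₀ : L, R x₀ ≠ ∅ ∧ R x₀ ≠ (M : Set L)) :
    ∀ x y : L, R y ⊆ R x ↔
      ∀ π : M →L[ℝ] ℝ, π ≠ 0 → (∀ k : M, (k : L) ∈ K → 0 ≤ π k) →
        -(rhoPi A M π y) ≤ -(rhoPi A M π x) := by
  obtain rfl : R = fun x => {m : L | m ∈ M ∧ x + m ∈ A} := funext hR
  intro x y
  refine ⟨fun hsub π _ _ => EReal.neg_le_neg_iff.mpr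
    (rhoPi_le_rhoPi M π fun n hn => (hsub ⟨n.2, hn⟩).2), fun h => ?_⟩
  by_contra hsub
  obtain ⟨m, ⟨hmM, hym⟩, hxm⟩ := not_subset.mp hsub
  obtain ⟨π, hπ0, hπK, hlt⟩ : ∃ π : M →L[ℝ] ℝ, π ≠ 0 ∧ (∀ k : M, (k : L) ∈ K → 0 ≤ π k) ∧
      rhoPi A M π y < rhoPi A M π x := by
    have hy := fun π => rhoPi_le_of_add_mem (n := ⟨m, hmM⟩) M π hym
    by_cases hx : ∃ n : M, x + (n : L) ∈ A
    · obtain ⟨n, hn⟩ := hx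
      obtain ⟨π, hπ0, hπK, hπ⟩ :=
        exists_nonneg_ne_zero_lt_rhoPi hAcl hAconv hAK M (m := ⟨m, hmM⟩) hn (hxm ⟨hmM, ·⟩)
      exact ⟨π, hπ0, hπK, (hy π).trans_lt hπ⟩
    · obtain ⟨x₀, hne, hneM⟩ := hx₀
      obtain ⟨n, hnM, hn⟩ := nonempty_iff_ne_empty.mpr hne
      obtain ⟨n', hn'M, hn'⟩ : ∃ n' ∈ M, x₀ + n' ∉ A := by
        by_contra! hall
        exact hneM (Subset.antisymm (fun _ h => h.1) fun w hw => ⟨hw, hall w hw⟩)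
      obtain ⟨π, hπ0, hπK, -⟩ := exists_nonneg_ne_zero_lt_rhoPi hAcl hAconv hAK M
        (n := ⟨n, hnM⟩) (m := ⟨n', hn'M⟩) hn hn'
      refine ⟨π, hπ0, hπK, ?_⟩
      rw [rhoPi_eq_top M π fun n hn => hx ⟨n, hn⟩]
      exact (hy π).trans_lt (EReal.coe_lt_top _)
  exact (EReal.neg_le_neg_iff.mp (h π hπ0 hπK)).not_gt hlt

theorem stmt_14 {L : Type*} [AddCommGroup L] [Module ℝ L] [TopologicalSpace L]
    [IsTopologicalAddGroup L] [ContinuousSMul ℝ L] [LocallyConvexSpace ℝ L] [T2Space L]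
    (K : ConvexCone ℝ L) (hKcl : IsClosed (K : Set L))
    (hKK : ∀ x : L, ∃ a ∈ K, ∃ b ∈ K, x = a - b)
    (A : Set L) (hAcl : IsClosed A) (hAconv : Convex ℝ A)
    (hAK : ∀ a ∈ A, ∀ k ∈ K, a + k ∈ A)
    (M : Submodule ℝ L) (hMcl : IsClosed (M : Set L))
    (hMK : ∃ m : L, m ∈ M ∧ m ∈ K ∧ m ≠ 0)
    (R : L → Set L) (hR : ∀ x, R x = {m : L | m ∈ M ∧ x + m ∈ A})
    (hx₀ : ∃ x₀ : L, R x₀ ≠ ∅ ∧ R x₀ ≠ (M : Set L)) :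
    ∀ x y : L, R y ⊆ R x ↔
      ∀ π : M →L[ℝ] ℝ, π ≠ 0 → (∀ k : M, (k : L) ∈ K → 0 ≤ π k) →
        -(rhoPi A M π y) ≤ -(rhoPi A M π x) :=
  stmt_14_general K A hAcl hAconv hAK M R hR hx₀
end

section
/- Suppose the interior of A is nonempty, ext(π) ∩ barr(A) ≠ ∅ for a nonzero π ∈ K_M⁺, and ρ_π(x) < ∞ for all x ∈ L, where ρ_π(x) = inf{π(m) : m ∈ M, x + m ∈ A}. Then ρ_π is finite-valued and continuous on L. -/
noncomputable def suppFn {L : Type*} [AddCommGroup L] [Module ℝ L] [TopologicalSpace L]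
    (S : Set L) (ψ : L →L[ℝ] ℝ) : EReal :=
  sInf ((fun x : L => ((ψ x : ℝ) : EReal)) '' S)

/-! Since `ψ` extends `π` and is bounded below on `A` by some `β`, every admissible `n` has
`π n = ψ (x + n) - ψ x ≥ β - ψ x`, so `ρ_π` never takes the value `⊥`; together with `ρ_π < ⊤`
it is a real-valued function, and it is convex because `A` is. At an interior point of `A` the
choice `n = 0` shows `ρ_π ≤ 0` nearby, and a convex function on a topological vector space that
is bounded above near one point is continuous everywhere. -/

open Set Filter Topology

section ConvexContinuity

variable {E : Type*} [AddCommGroup E] [Module ℝ E] {f : E → ℝ}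

lemma ConvexOn.abs_sub_le_of_le (hf : ConvexOn ℝ univ f) {x u : E} {c t : ℝ}
    (hadd : f (x + u) ≤ c) (hsub : f (x - u) ≤ c) (ht₀ : 0 ≤ t) (ht₁ : t ≤ 1) :
    |f (x + t • u) - f x| ≤ t * (c - f x) := by
  have hupper : f (x + t • u) ≤ (1 - t) * f x + t * f (x + u) := by
    have hxu : x + t • u = (1 - t) • x + t • (x + u) := by module
    rw [hxu]
    exact hf.2 trivial trivial (by linarith) ht₀ (by ring)
  have hlower : f x ≤ (1 + t)⁻¹ * f (x + t • u) + (t * (1 + t)⁻¹) * f (x - u) := by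
    have hx : x = (1 + t)⁻¹ • (x + t • u) + (t * (1 + t)⁻¹) • (x - u) := by
      match_scalars
      · field_simp
      · ring
    conv_lhs => rw [hx]
    exact hf.2 trivial trivial (by positivity) (by positivity) (by field_simp)
  have hlower' : (1 + t) * f x ≤ f (x + t • u) + t * f (x - u) := by
    have := mul_le_mul_of_nonneg_left hlower (by linarith : (0 : ℝ) ≤ 1 + t)
    field_simp at this
    linarith
  rw [abs_le]
  constructor <;> nlinarith

variable [TopologicalSpace E] [IsTopologicalAddGroup E] [ContinuousSMul ℝ E]

lemma ConvexOn.continuousAt_of_eventually_le (hf : ConvexOn ℝ univ f) {x : E} {c : ℝ}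
    (h : ∀ᶠ y in 𝓝 x, f y ≤ c) : ContinuousAt f x := by
  have hfx : f x ≤ c := h.self_of_nhds
  rw [ContinuousAt, Metric.tendsto_nhds]
  intro ε hε
  set t := ε / (c - f x + ε)
  have ht₀ : 0 < t := by positivity
  have ht₁ : t ≤ 1 := (div_le_one (by linarith)).2 (by linarith)
  have htε : t * (c - f x) < ε := by
    rw [div_mul_eq_mul_div, div_lt_iff₀ (by linarith)]
    nlinarith
  have hadd : Tendsto (fun y => x + t⁻¹ • (y - x)) (𝓝 x) (𝓝 x) := by
    simpa using ((by fun_prop : Continuous fun y : E => x + t⁻¹ • (y - x)).tendsto x)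
  have hsub : Tendsto (fun y => x - t⁻¹ • (y - x)) (𝓝 x) (𝓝 x) := by
    simpa using ((by fun_prop : Continuous fun y : E => x - t⁻¹ • (y - x)).tendsto x)
  filter_upwards [hadd.eventually h, hsub.eventually h] with y hy₁ hy₂
  have hy : y = x + t • t⁻¹ • (y - x) := by rw [smul_inv_smul₀ ht₀.ne']; abel
  rw [Real.dist_eq, hy]
  exact (hf.abs_sub_le_of_le hy₁ hy₂ ht₀.le ht₁).trans_lt htε

lemma ConvexOn.continuous_of_eventually_le (hf : ConvexOn ℝ univ f) {x₀ : E} {c : ℝ}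
    (h : ∀ᶠ y in 𝓝 x₀, f y ≤ c) : Continuous f := by
  refine continuous_iff_continuousAt.2 fun x => ?_
  -- Near `x`, write `y` as the midpoint of a point near `x₀` and the fixed point `2 • x - x₀`.
  refine hf.continuousAt_of_eventually_le (c := c / 2 + f ((2 : ℝ) • x - x₀) / 2) ?_
  have hmove : Tendsto (fun y => x₀ + (2 : ℝ) • (y - x)) (𝓝 x) (𝓝 x₀) := by
    simpa using ((by fun_prop : Continuous fun y : E => x₀ + (2 : ℝ) • (y - x)).tendsto x)
  filter_upwards [hmove.eventually h] with y hy
  have hmid : y = (1 / 2 : ℝ) • (x₀ + (2 : ℝ) • (y - x)) + (1 / 2 : ℝ) • ((2 : ℝ) • x - x₀) := by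
    module
  calc f y ≤ 1 / 2 * f (x₀ + (2 : ℝ) • (y - x)) + 1 / 2 * f ((2 : ℝ) • x - x₀) := by
        conv_lhs => rw [hmid]
        exact hf.2 trivial trivial (by norm_num) (by norm_num) (by norm_num)
    _ ≤ c / 2 + f ((2 : ℝ) • x - x₀) / 2 := by linarith

end ConvexContinuity

section RhoPi

variable {L : Type*} [AddCommGroup L] [Module ℝ L] [TopologicalSpace L]
  {A : Set L} {M : Submodule ℝ L} {π : M →L[ℝ] ℝ}

lemma rhoPi_le {x : L} {n : M} (hn : x + n ∈ A) : rhoPi A M π x ≤ π n :=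
  sInf_le ⟨n, hn, rfl⟩

lemma toReal_rhoPi_le {x : L} (hx : rhoPi A M π x ≠ ⊥) {n : M} (hn : x + n ∈ A) :
    (rhoPi A M π x).toReal ≤ π n := by
  simpa using EReal.toReal_le_toReal (rhoPi_le hn) hx (EReal.coe_ne_top _)

lemma exists_lt_of_rhoPi_lt {x : L} {r : ℝ} (h : rhoPi A M π x < r) :
    ∃ n : M, x + n ∈ A ∧ π n < r := by
  obtain ⟨_, ⟨n, hn, rfl⟩, hlt⟩ := sInf_lt_iff.1 h
  exact ⟨n, hn, EReal.coe_lt_coe_iff.1 hlt⟩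

lemma toReal_suppFn_le {S : Set L} {ψ : L →L[ℝ] ℝ} (hS : suppFn S ψ ≠ ⊥) {a : L} (ha : a ∈ S) :
    (suppFn S ψ).toReal ≤ ψ a := by
  have h : suppFn S ψ ≤ ψ a := sInf_le ⟨a, ha, rfl⟩
  simpa using EReal.toReal_le_toReal h hS (EReal.coe_ne_top _)

lemma rhoPi_ne_bot {ψ : L →L[ℝ] ℝ} (hψ : ∀ m : M, ψ m = π m) (hA : suppFn A ψ ≠ ⊥) (x : L) :
    rhoPi A M π x ≠ ⊥ := by
  have hlower : (((suppFn A ψ).toReal - ψ x : ℝ) : EReal) ≤ rhoPi A M π x := by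
    refine le_sInf ?_
    rintro _ ⟨n, hn, rfl⟩
    have := toReal_suppFn_le hA hn
    rw [map_add, hψ] at this
    exact EReal.coe_le_coe_iff.2 (by linarith)
  exact ne_bot_of_le_ne_bot (EReal.coe_ne_bot _) hlower

lemma convexOn_toReal_rhoPi (hA : Convex ℝ A)
    (hreal : ∀ x : L, rhoPi A M π x ≠ ⊥ ∧ rhoPi A M π x ≠ ⊤) :
    ConvexOn ℝ univ fun x => (rhoPi A M π x).toReal := by
  have happrox : ∀ x : L, ∀ ε > 0, ∃ n : M, x + n ∈ A ∧ π n < (rhoPi A M π x).toReal + ε := by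
    intro x ε hε
    refine exists_lt_of_rhoPi_lt ?_
    have hlt : ((rhoPi A M π x).toReal : EReal) < ((rhoPi A M π x).toReal + ε : ℝ) := by
      exact_mod_cast lt_add_of_pos_right _ hε
    rwa [EReal.coe_toReal (hreal x).2 (hreal x).1] at hlt
  refine ⟨convex_univ, fun x _ y _ a b ha hb hab => le_of_forall_pos_le_add fun ε hε => ?_⟩
  obtain ⟨m, hm, hmε⟩ := happrox x ε hε
  obtain ⟨n, hn, hnε⟩ := happrox y ε hε
  have hfeas : a • x + b • y + ((a • m + b • n : M) : L) ∈ A := by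
    convert hA hm hn ha hb hab using 1
    push_cast
    module
  calc (rhoPi A M π (a • x + b • y)).toReal ≤ π (a • m + b • n) :=
        toReal_rhoPi_le (hreal _).1 hfeas
    _ = a * π m + b * π n := by simp
    _ ≤ a * ((rhoPi A M π x).toReal + ε) + b * ((rhoPi A M π y).toReal + ε) := by gcongr
    _ = a • (rhoPi A M π x).toReal + b • (rhoPi A M π y).toReal + ε := by
        simp only [smul_eq_mul]
        linear_combination ε * hab

end RhoPi

theorem stmt_18_general {L : Type*} [AddCommGroup L] [Module ℝ L] [TopologicalSpace L]
    [IsTopologicalAddGroup L] [ContinuousSMul ℝ L]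
    (A : Set L) (hAconv : Convex ℝ A)
    (hAint : (interior A).Nonempty)
    (M : Submodule ℝ L)
    (π : M →L[ℝ] ℝ)
    (hext : ∃ ψ : L →L[ℝ] ℝ, (∀ m : M, ψ (m : L) = π m) ∧ suppFn A ψ ≠ ⊥)
    (hfin : ∀ x : L, rhoPi A M π x ≠ ⊤) :
    (∀ x : L, rhoPi A M π x ≠ ⊥ ∧ rhoPi A M π x ≠ ⊤) ∧
    Continuous (rhoPi A M π) := by
  obtain ⟨ψ, hψ, hsupp⟩ := hext
  have hreal : ∀ x, rhoPi A M π x ≠ ⊥ ∧ rhoPi A M π x ≠ ⊤ :=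
    fun x => ⟨rhoPi_ne_bot hψ hsupp x, hfin x⟩
  refine ⟨hreal, ?_⟩
  obtain ⟨a, ha⟩ := hAint
  have hnonpos : ∀ᶠ y in 𝓝 a, (rhoPi A M π y).toReal ≤ 0 := by
    filter_upwards [isOpen_interior.mem_nhds ha] with y hy
    simpa using toReal_rhoPi_le (hreal y).1 (n := 0) (by simpa using interior_subset hy)
  have hcont : Continuous fun x => (rhoPi A M π x).toReal :=
    (convexOn_toReal_rhoPi hAconv hreal).continuous_of_eventually_le hnonpos
  have hcoe : (fun x => ((rhoPi A M π x).toReal : EReal)) = rhoPi A M π :=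
    funext fun x => EReal.coe_toReal (hreal x).2 (hreal x).1
  exact hcoe ▸ continuous_coe_real_ereal.comp hcont

theorem stmt_18 {L : Type*} [AddCommGroup L] [Module ℝ L] [TopologicalSpace L]
    [IsTopologicalAddGroup L] [ContinuousSMul ℝ L] [LocallyConvexSpace ℝ L] [T2Space L]
    (K : ConvexCone ℝ L) (hKcl : IsClosed (K : Set L))
    (hKK : ∀ x : L, ∃ a ∈ K, ∃ b ∈ K, x = a - b)
    (A : Set L) (hAcl : IsClosed A) (hAconv : Convex ℝ A)
    (hAK : ∀ a ∈ A, ∀ k ∈ K, a + k ∈ A)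
    (hAint : (interior A).Nonempty)
    (M : Submodule ℝ L) (hMcl : IsClosed (M : Set L))
    (π : M →L[ℝ] ℝ) (hπ0 : π ≠ 0) (hπK : ∀ k : M, (k : L) ∈ K → 0 ≤ π k)
    (hext : ∃ ψ : L →L[ℝ] ℝ, (∀ m : M, ψ (m : L) = π m) ∧ suppFn A ψ ≠ ⊥)
    (hfin : ∀ x : L, rhoPi A M π x ≠ ⊤) :
    (∀ x : L, rhoPi A M π x ≠ ⊥ ∧ rhoPi A M π x ≠ ⊤) ∧
    Continuous (rhoPi A M π) :=
  stmt_18_general A hAconv hAint M π hext hfin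
end
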